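/- Let p be a prime with p ≡ 3 (mod 4). Then the sum over k from 0 to p-1 of k³ * binomial(2k,k)³ / 64^k is congruent to -(1/640) * (((p+1)/4)!)^(-4) modulo p; and if instead p ≡ 1 (mod 4), the sum is congruent to 0 modulo p. -/

import Mathlib

/-!
Modulo `p = 2m + 1` one has `C(2k, k) ≡ (-4)^k C(m, k)` for `k < p`, so the sum becomes
`∑ (-1)^k k³ C(m, k)³ = -m³ ∑ (-1)^j C(m - 1, j)³`. This alternating sum of cubes vanishes for
odd `m - 1` by the symmetry `j ↦ m - 1 - j`, and for `m - 1 = 2n` it equals `(-1)^n (3n)!/(n!)³`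
(Dixon), which follows from a first-order recurrence certified by Zeilberger's algorithm.
For `p = 4n + 3`, Wilson's theorem gives `(3n)! (n + 2)! ≡ (-1)^(n+1)`, and `4(n + 1) ≡ 1`
expresses everything through `(n + 1)!`.
-/

open Finset Nat

theorem cast_choose_succ_right_mul {R : Type*} [CommRing R] (n k : ℕ) :
    (n.choose (k + 1) : R) * (k + 1) = n.choose k * (n - k) := by
  rcases le_or_gt k n with h | h
  · have := congrArg (Nat.cast : ℕ → R) (n.choose_succ_right_eq k)
    push_cast [Nat.cast_sub h] at this
    exact this
  · simp [choose_eq_zero_of_lt h, choose_eq_zero_of_lt (h.trans k.lt_succ_self)]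

theorem cast_choose_mul_succ {R : Type*} [CommRing R] (n k : ℕ) :
    (n.choose k : R) * (n + 1) = (n + 1).choose k * (n + 1 - k) := by
  rcases le_or_gt k (n + 1) with h | h
  · have := congrArg (Nat.cast : ℕ → R) (n.choose_mul_succ_eq k)
    push_cast [Nat.cast_sub h] at this
    exact this
  · simp [choose_eq_zero_of_lt h, choose_eq_zero_of_lt ((n.lt_succ_self).trans h)]

def dixonSum (N : ℕ) : ℤ := ∑ k ∈ range (N + 1), (-1) ^ k * (N.choose k : ℤ) ^ 3

theorem dixonSum_two_mul_add_one (n : ℕ) : dixonSum (2 * n + 1) = 0 := by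
  have hanti : dixonSum (2 * n + 1) = -dixonSum (2 * n + 1) := by
    rw [dixonSum, ← sum_neg_distrib]
    conv_lhs => rw [← sum_range_reflect]
    refine sum_congr rfl fun k hk => ?_
    have hk : k ≤ 2 * n + 1 := Nat.le_of_lt_succ (mem_range.1 hk)
    have hsign : (-1 : ℤ) ^ (2 * n + 1 - k) * (-1) ^ k = -1 := by
      rw [← pow_add, Nat.sub_add_cancel hk, (odd_two_mul_add_one n).neg_one_pow]
    have hsq : (-1 : ℤ) ^ k * (-1) ^ k = 1 := by rw [← pow_add, ← two_mul, pow_mul]; norm_num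
    rw [Nat.add_sub_cancel, choose_symm hk]
    linear_combination (-((2 * n + 1).choose k : ℤ) ^ 3 * (-1) ^ (2 * n + 1 - k)) * hsq
      + (((2 * n + 1).choose k : ℤ) ^ 3 * (-1) ^ k) * hsign
  omega

-- Found by Zeilberger's algorithm: `dixonCertificate N` telescopes the recurrence
-- `dixonSum_add_two`.
def dixonCertificatePoly (n j : ℤ) : ℤ :=
  -(232 + 784 * n + 1042 * n ^ 2 + 682 * n ^ 3 + 220 * n ^ 4 + 28 * n ^ 5)
    + (414 + 1113 * n + 1107 * n ^ 2 + 483 * n ^ 3 + 78 * n ^ 4) * j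
    - (294 + 594 * n + 396 * n ^ 2 + 87 * n ^ 3) * j ^ 2
    + 3 * (3 * n + 4) * (5 * n + 8) * j ^ 3
    - 3 * (3 * n + 4) * j ^ 4

theorem dixonCertificatePoly_spec (n j : ℤ) :
    -(n + 2 - j) ^ 3 * dixonCertificatePoly n (j + 1) - j ^ 3 * dixonCertificatePoly n j =
      3 * (3 * n + 2) * (3 * n + 4) * ((n + 2 - j) * (n + 1 - j)) ^ 3
        + (n + 1) ^ 3 * (n + 2) ^ 5 := by
  unfold dixonCertificatePoly
  ring

def dixonCertificate (N k : ℕ) : ℤ :=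
  (-1) ^ k * ((N + 2).choose k : ℤ) ^ 3 * k ^ 3 * dixonCertificatePoly N k

theorem dixon_telescoping (N k : ℕ) :
    (((N : ℤ) + 1) * (N + 2)) ^ 3 *
        (3 * (3 * N + 2) * (3 * N + 4) * ((-1) ^ k * (N.choose k : ℤ) ^ 3)
          + ((N : ℤ) + 2) ^ 2 * ((-1) ^ k * ((N + 2).choose k : ℤ) ^ 3)) =
      dixonCertificate N (k + 1) - dixonCertificate N k := by
  have h1 : (N.choose k : ℤ) * ((N + 1) * (N + 2)) =
      (N + 2).choose k * ((N + 2 - k) * (N + 1 - k)) := by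
    have h := cast_choose_mul_succ (R := ℤ) N k
    have h' := cast_choose_mul_succ (R := ℤ) (N + 1) k
    push_cast at h'
    linear_combination ((N : ℤ) + 2) * h + ((N : ℤ) + 1 - k) * h'
  have h3 := cast_choose_succ_right_mul (R := ℤ) (N + 2) k
  push_cast at h3
  have h1c := congrArg (· ^ 3) h1
  have h3c := congrArg (· ^ 3) h3
  have hspec := dixonCertificatePoly_spec N k
  simp only [dixonCertificate] at h1c h3c ⊢
  push_cast
  linear_combination (3 * (3 * (N : ℤ) + 2) * (3 * N + 4) * (-1) ^ k) * h1c
    + ((-1) ^ k * dixonCertificatePoly N (k + 1)) * h3c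
    - ((-1) ^ k * ((N + 2).choose k : ℤ) ^ 3) * hspec

theorem dixonSum_eq_sum_range_of_le {N M : ℕ} (h : N + 1 ≤ M) :
    dixonSum N = ∑ k ∈ range M, (-1) ^ k * (N.choose k : ℤ) ^ 3 := by
  refine sum_subset (range_subset_range.2 h) fun k _ hk => ?_
  simp [choose_eq_zero_of_lt (by simpa using hk : N < k)]

theorem dixonSum_add_two (N : ℕ) :
    ((N : ℤ) + 2) ^ 2 * dixonSum (N + 2) = -(3 * (3 * N + 2) * (3 * N + 4)) * dixonSum N := by
  have htel := sum_range_sub (dixonCertificate N) (N + 3)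
  rw [← sum_congr rfl fun k _ => dixon_telescoping N k, ← mul_sum, sum_add_distrib,
    ← mul_sum, ← mul_sum, ← dixonSum_eq_sum_range_of_le (by omega),
    ← dixonSum_eq_sum_range_of_le le_rfl] at htel
  have hend : dixonCertificate N (N + 3) = 0 := by simp [dixonCertificate]
  have hstart : dixonCertificate N 0 = 0 := by simp [dixonCertificate]
  rw [hend, hstart, sub_zero] at htel
  have hX : (((N : ℤ) + 1) * (N + 2)) ^ 3 ≠ 0 := by positivity
  linear_combination (mul_eq_zero.1 htel).resolve_left hX

theorem dixonSum_two_mul_mul_factorial_pow (n : ℕ) :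
    dixonSum (2 * n) * (n ! : ℤ) ^ 3 = (-1) ^ n * (3 * n)! := by
  induction n with
  | zero => simp [dixonSum]
  | succ n ih =>
    have hrec : ((n : ℤ) + 1) ^ 2 * dixonSum (2 * n + 2) =
        -(3 * (3 * n + 1) * (3 * n + 2)) * dixonSum (2 * n) := by
      have h := dixonSum_add_two (2 * n)
      push_cast at h
      refine mul_left_cancel₀ (four_ne_zero : (4 : ℤ) ≠ 0) ?_
      linear_combination h
    rw [show 3 * (n + 1) = 3 * n + 2 + 1 by ring, show 2 * (n + 1) = 2 * n + 2 by ring]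
    push_cast [factorial_succ]
    linear_combination ((n : ℤ) + 1) * (n ! : ℤ) ^ 3 * hrec
      - (3 * ((n : ℤ) + 1) * (3 * n + 1) * (3 * n + 2)) * ih

theorem sum_neg_one_pow_mul_pow_three_mul_choose_pow_three {R : Type*} [CommRing R] (N : ℕ) :
    ∑ k ∈ range (N + 2), (-1 : R) ^ k * (k : R) ^ 3 * ((N + 1).choose k : R) ^ 3 =
      -((N : R) + 1) ^ 3 * dixonSum N := by
  rw [sum_range_succ', dixonSum, Int.cast_sum, mul_sum]
  rw [Nat.cast_zero, zero_pow three_ne_zero, mul_zero, zero_mul, add_zero]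
  refine sum_congr rfl fun k _ => ?_
  have h := congrArg (fun n : ℕ => (n : R) ^ 3) (N.add_one_mul_choose_eq k)
  push_cast at h ⊢
  linear_combination (-1 : R) ^ k * h

section ZModPrime

variable {p : ℕ} [hp : Fact p.Prime]

theorem ZMod.factorial_sub_one_sub_mul_neg_one_pow_mul_factorial {k : ℕ} (hk : k < p) :
    ((p - 1 - k)! : ZMod p) * ((-1) ^ k * k !) = -1 := by
  rw [← ZMod.cast_descFactorial hk.le, ← Nat.cast_mul, factorial_mul_descFactorial (by omega),
    ZMod.wilsons_lemma]

theorem ZMod.cast_choose_two_mul_self {m k : ℕ} (hm : 2 * m + 1 = p) (hk : k < p) :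
    ((2 * k).choose k : ZMod p) = (-4) ^ k * m.choose k := by
  rcases le_or_gt k m with hkm | hmk
  · have hp0 : 2 * (m : ZMod p) + 1 = 0 := by
      have h : ((2 * m + 1 : ℕ) : ZMod p) = 0 := by rw [hm, ZMod.natCast_self]
      push_cast at h
      exact h
    induction k with
    | zero => simp
    | succ j ih =>
      have hj : (j : ZMod p) + 1 ≠ 0 := by
        rw [← Nat.cast_succ, Ne, ZMod.natCast_eq_zero_iff]
        exact Nat.not_dvd_of_pos_of_lt j.succ_pos hk
      refine mul_left_cancel₀ hj ?_
      have hc := congrArg (Nat.cast : ℕ → ZMod p) (succ_mul_centralBinom_succ j)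
      simp only [centralBinom_eq_two_mul_choose] at hc
      have hr := cast_choose_succ_right_mul (R := ZMod p) m j
      push_cast at hc
      rw [ih (by omega) (by omega)] at hc
      linear_combination hc - (-4 : ZMod p) ^ (j + 1) * hr
        + 2 * (-4 : ZMod p) ^ j * (m.choose j) * hp0
  · rw [choose_eq_zero_of_lt hmk, Nat.cast_zero, mul_zero, ZMod.natCast_eq_zero_iff, two_mul]
    exact hp.out.dvd_choose_add hk hk (by omega)

theorem sum_range_pow_three_mul_choose_two_mul_pow_three_div_sixtyFour_pow {N : ℕ}
    (hN : 2 * N + 3 = p) :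
    ∑ k ∈ range p, (k : ZMod p) ^ 3 * ((2 * k).choose k : ZMod p) ^ 3 * ((64 : ZMod p) ^ k)⁻¹ =
      -((N : ZMod p) + 1) ^ 3 * dixonSum N := by
  have h2 : (2 : ZMod p) ≠ 0 := by
    rw [← Nat.cast_ofNat, Ne, ZMod.natCast_eq_zero_iff]
    exact Nat.not_dvd_of_pos_of_lt two_pos (by omega)
  have h64 : (64 : ZMod p) ≠ 0 := by
    simpa [show (64 : ZMod p) = 2 ^ 6 by norm_num] using pow_ne_zero 6 h2
  rw [← sum_neg_one_pow_mul_pow_three_mul_choose_pow_three]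
  calc _ = ∑ k ∈ range p,
        (-1 : ZMod p) ^ k * (k : ZMod p) ^ 3 * ((N + 1).choose k : ZMod p) ^ 3 := by
        refine sum_congr rfl fun k hk => ?_
        have hsign : ((-4 : ZMod p) ^ 3) ^ k = (-1) ^ k * 64 ^ k := by
          rw [← neg_pow]
          norm_num
        rw [ZMod.cast_choose_two_mul_self (m := N + 1) (by omega) (mem_range.1 hk), mul_pow,
          ← pow_mul, mul_comm k, pow_mul, hsign]
        field_simp
    _ = _ := by
        refine (sum_subset (range_subset_range.2 (by omega)) fun k _ hk => ?_).symm
        simp [choose_eq_zero_of_lt (by simp at hk; omega : N + 1 < k)]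

end ZModPrime

theorem ZMod.pow_three_mul_dixonSum_mul_factorial_pow_four {p n : ℕ} [Fact p.Prime]
    (hn : 4 * n + 3 = p) :
    (((2 * n : ℕ) : ZMod p) + 1) ^ 3 * dixonSum (2 * n) * (640 * ((n + 1)! : ZMod p) ^ 4) = 1 := by
  have hp0 : 4 * (n : ZMod p) + 3 = 0 := by
    have h : ((4 * n + 3 : ℕ) : ZMod p) = 0 := by rw [hn, ZMod.natCast_self]
    push_cast at h
    exact h
  have hdixon := congrArg (Int.cast : ℤ → ZMod p) (dixonSum_two_mul_mul_factorial_pow n)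
  have hwilson :=
    ZMod.factorial_sub_one_sub_mul_neg_one_pow_mul_factorial (p := p) (k := n + 2) (by omega)
  rw [show p - 1 - (n + 2) = 3 * n by omega] at hwilson
  push_cast [factorial_succ] at hdixon hwilson ⊢
  set d := (dixonSum (2 * n) : ZMod p)
  set w := ((3 * n)! : ZMod p)
  set f := (n ! : ZMod p)
  have hf : f = 4 * (((n : ZMod p) + 1) * f) := by linear_combination -f * hp0
  have hwF : 5 * (-1) ^ n * w * (((n : ZMod p) + 1) * f) = -4 := by
    linear_combination 4 * hwilson - (-1) ^ n * w * (n + 1) * f * hp0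
  calc (2 * (n : ZMod p) + 1) ^ 3 * d * (640 * (((n : ZMod p) + 1) * f) ^ 4)
      = 10 * (2 * (n : ZMod p) + 1) ^ 3 * (d * f ^ 3) * (((n : ZMod p) + 1) * f) := by
        nth_rewrite 2 [hf]; ring
    _ = 2 * (2 * (n : ZMod p) + 1) ^ 3 * (5 * (-1) ^ n * w * (((n : ZMod p) + 1) * f)) := by
        rw [hdixon]; ring
    _ = 1 := by
        rw [hwF]
        linear_combination (-(4 * (n : ZMod p) + 3) ^ 2 + 3 * (4 * n + 3) - 3) * hp0

theorem stmt_19_general (p : ℕ) (hp : p.Prime) :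
    (p % 4 = 3 →
      ∑ k ∈ Finset.range p,
          (k : ZMod p) ^ 3 * ((2 * k).choose k : ZMod p) ^ 3 * ((64 : ZMod p) ^ k)⁻¹ =
        -((640 : ZMod p)⁻¹ * ((((p + 1) / 4).factorial : ZMod p)⁻¹) ^ 4)) ∧
    (p % 4 = 1 →
      ∑ k ∈ Finset.range p,
          (k : ZMod p) ^ 3 * ((2 * k).choose k : ZMod p) ^ 3 * ((64 : ZMod p) ^ k)⁻¹ =
        0) := by
  have := Fact.mk hp
  refine ⟨fun hp4 => ?_, fun hp4 => ?_⟩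
  · obtain ⟨n, hn⟩ : ∃ n, 4 * n + 3 = p := ⟨p / 4, by omega⟩
    rw [sum_range_pow_three_mul_choose_two_mul_pow_three_div_sixtyFour_pow (N := 2 * n) (by omega),
      show (p + 1) / 4 = n + 1 by omega, inv_pow, ← mul_inv, neg_mul]
    exact congrArg Neg.neg
      (eq_inv_of_mul_eq_one_left (ZMod.pow_three_mul_dixonSum_mul_factorial_pow_four hn))
  · obtain ⟨n, hn⟩ : ∃ n, 2 * (2 * n + 1) + 3 = p := ⟨p / 4 - 1, by have := hp.two_le; omega⟩
    rw [sum_range_pow_three_mul_choose_two_mul_pow_three_div_sixtyFour_pow hn,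
      dixonSum_two_mul_add_one, Int.cast_zero, mul_zero]

theorem stmt_19 (p : ℕ) (hp : p.Prime) (hodd : Odd p) :
    (p % 4 = 3 →
      ∑ k ∈ Finset.range p,
          (k : ZMod p) ^ 3 * ((2 * k).choose k : ZMod p) ^ 3 * ((64 : ZMod p) ^ k)⁻¹ =
        -((640 : ZMod p)⁻¹ * ((((p + 1) / 4).factorial : ZMod p)⁻¹) ^ 4)) ∧
    (p % 4 = 1 →
      ∑ k ∈ Finset.range p,
          (k : ZMod p) ^ 3 * ((2 * k).choose k : ZMod p) ^ 3 * ((64 : ZMod p) ^ k)⁻¹ =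
        0) :=
  stmt_19_general p hp
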